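/- For all real numbers x and y with d(x,y) = 0, 0 < x < 1, and −1/3 ≤ y < 0, the rational functions τ := Nτ(x,y)/Dτ(x,y), R₁ := N₁(x,y)/Dd(x,y), R₂ := N₂(x,y)/Dd(x,y) are well defined (the denominators are nonzero) and satisfy 0 < τ < 1, R₁ > 0, R₂ > 0, and R₁ + R₂ < 1. -/

import Mathlib

def d (x y : ℝ) : ℝ := x^2*y + 3*x^2 - x*y - 3*y^2 - 3*x - 3*y
def Ntau (x y : ℝ) : ℝ := (y - x) * (2*x + 3*y + 1)
def Dtau (x y : ℝ) : ℝ := 2*x*y - 5*y - 3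
def P (x y : ℝ) : ℝ :=
  4*x^4 + 3*x^2*y^2 - 20*x^3 - 6*x^2*y - 15*x*y^2 + 31*x^2 + 6*x*y
    + 21*y^2 - 15*x + 18*y + 9
def Q1 (x y : ℝ) : ℝ :=
  -4*x^4 - 12*x^3*y + x^2*y^2 + 9*x*y^3 + 8*x^3 + 42*x^2*y + 10*x*y^2
    - 27*y^3 + 17*x^2 - 15*x*y - 38*y^2 - 12*x - 15*y
def Q2 (x y : ℝ) : ℝ :=
  4*x^4 - 4*x^3*y - 13*x^2*y^2 + 9*x*y^3 - 8*x^3 + 2*x^2*y + 44*x*y^2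
    - 18*y^3 + 7*x^2 + 29*x*y - 49*y^2 + 6*x - 36*y - 9
def N1 (x y : ℝ) : ℝ := (-2*x + y + 3) * (x - 1) * Q1 x y
def N2 (x y : ℝ) : ℝ := -(2*x^2 + x*y - 5*x - 4*y) * Q2 x y
def Dd (x y : ℝ) : ℝ := (2*x*y - 5*y - 3) * P x y

/-!
Every denominator is negative on the box `0 < x < 1`, `-1/3 ≤ y < 0`: `Dtau` by the bounds
directly, and `Dd = Dtau * P` because `P` is a sum of squares up to the positive factor
`x² - 5x + 7`, vanishing only at `x ∈ {1, 3}`. The numerators are negative too, so the upper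
bounds become `Dtau < Ntau` and `Dd < N1 + N2`. The latter holds on the whole box; the remaining
sign conditions hold only on the curve `d = 0`, which reads `x (1 - x) (y + 3) = -3 y (y + 1)`
and is used to trade `x (1 - x)` for a function of `y`.
-/

variable {x y : ℝ}

theorem d_eq_zero_iff : d x y = 0 ↔ x * (1 - x) * (y + 3) = -3 * y * (y + 1) := by
  unfold d
  constructor <;> intro h <;> linear_combination -h

theorem Dtau_neg (hx : 0 ≤ x) (hy0 : -1/3 ≤ y) (hy1 : y ≤ 0) : Dtau x y < 0 := by
  unfold Dtau
  nlinarith [mul_nonpos_of_nonneg_of_nonpos hx hy1]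

/-- `P`, as a quadratic in `y`, has discriminant `-48 (x - 1)⁴ (x - 3)²`. -/
theorem mul_P_eq : (x^2 - 5*x + 7) * P x y
    = 3 * ((x^2 - 5*x + 7) * y - (x^2 - x - 3))^2 + 4 * ((x - 1)^2 * (x - 3))^2 := by
  unfold P
  ring

theorem P_pos (h1 : x ≠ 1) (h3 : x ≠ 3) : 0 < P x y := by
  have ha : 0 < x^2 - 5*x + 7 := by nlinarith [sq_nonneg (2*x - 5)]
  have hne : (x - 1)^2 * (x - 3) ≠ 0 :=
    mul_ne_zero (pow_ne_zero 2 (sub_ne_zero.2 h1)) (sub_ne_zero.2 h3)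
  have hprod : 0 < (x^2 - 5*x + 7) * P x y := by
    rw [mul_P_eq]
    exact add_pos_of_nonneg_of_pos (by positivity) (mul_pos (by norm_num) (pow_two_pos_of_ne_zero hne))
  exact pos_of_mul_pos_right hprod ha.le

theorem Dd_eq : Dd x y = Dtau x y * P x y := rfl

theorem Ntau_neg (hx : 0 < x) (hy0 : -1/3 ≤ y) (hy1 : y < 0) : Ntau x y < 0 :=
  mul_neg_of_neg_of_pos (by linarith) (by linarith)

theorem Dtau_lt_Ntau (hd : d x y = 0) (hx0 : 0 < x) (hx1 : x < 1) (hy0 : -1/3 ≤ y) (hy1 : y < 0) :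
    Dtau x y < Ntau x y := by
  have hc := d_eq_zero_iff.1 hd
  have key : (y + 3) * (Ntau x y - Dtau x y)
      = 3 * (1 + y) * ((1 - x) * (y + 3) + y * (y + 1)) := by
    unfold Ntau Dtau
    linear_combination 2 * hc
  have hx : x * ((1 - x) * (y + 3) + y * (y + 1)) = -y * (y + 1) * (3 - x) := by
    linear_combination hc
  have hpos : 0 < (1 - x) * (y + 3) + y * (y + 1) :=
    pos_of_mul_pos_right (hx ▸ mul_pos (mul_pos (by linarith) (by linarith)) (by linarith)) hx0.le
  have hprod : 0 < (y + 3) * (Ntau x y - Dtau x y) := key ▸ mul_pos (by linarith) hpos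
  exact sub_pos.1 (pos_of_mul_pos_right hprod (by linarith))

theorem Q1_pos (hd : d x y = 0) (hx0 : 0 < x) (hx1 : x < 1) (hy0 : -1/3 ≤ y) (hy1 : y < 0) :
    0 < Q1 x y := by
  unfold d at hd
  unfold Q1
  nlinarith [mul_pos hx0 (neg_pos.2 hy1), mul_pos hx0 (sub_pos.2 hx1),
    mul_pos (mul_pos hx0 hx0) (neg_pos.2 hy1),
    mul_nonneg (mul_pos hx0 (sub_pos.2 hx1)).le (neg_pos.2 hy1).le,
    mul_nonneg (mul_nonneg hx0.le hx0.le) (sq_nonneg (y + 1/3))]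

theorem Q2_neg (hd : d x y = 0) (hx0 : 0 < x) (hx1 : x < 1) (hy0 : -1/3 ≤ y) (hy1 : y < 0) :
    Q2 x y < 0 := by
  unfold d at hd
  unfold Q2
  nlinarith [mul_pos hx0 (neg_pos.2 hy1), mul_pos hx0 (sub_pos.2 hx1),
    mul_pos (sub_pos.2 hx1) (neg_pos.2 hy1), mul_nonneg (sq_nonneg (x - 1)) (neg_pos.2 hy1).le]

theorem N1_neg (hd : d x y = 0) (hx0 : 0 < x) (hx1 : x < 1) (hy0 : -1/3 ≤ y) (hy1 : y < 0) :
    N1 x y < 0 :=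
  mul_neg_of_neg_of_pos (mul_neg_of_pos_of_neg (by linarith) (by linarith))
    (Q1_pos hd hx0 hx1 hy0 hy1)

theorem N2_neg (hd : d x y = 0) (hx0 : 0 < x) (hx1 : x < 1) (hy0 : -1/3 ≤ y) (hy1 : y < 0) :
    N2 x y < 0 := by
  have hc := d_eq_zero_iff.1 hd
  have key : (y + 3) * (2*x^2 + x*y - 5*x - 4*y) = (y - 3) * (x * (y + 3) + 2 * y) := by
    linear_combination -2 * hc
  have hx : x * (y + 3) + 2 * y = x^2 * (y + 3) + -y * (3 * y + 1) := by
    linear_combination hc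
  have hpos : 0 < x * (y + 3) + 2 * y :=
    hx ▸ add_pos_of_pos_of_nonneg (mul_pos (by positivity) (by linarith))
      (mul_nonneg (by linarith) (by linarith))
  have hprod : (y + 3) * (2*x^2 + x*y - 5*x - 4*y) < 0 :=
    key ▸ mul_neg_of_neg_of_pos (by linarith) hpos
  have hA : 2*x^2 + x*y - 5*x - 4*y < 0 := neg_of_mul_neg_right hprod (by linarith)
  exact mul_neg_of_pos_of_neg (neg_pos.2 hA) (Q2_neg hd hx0 hx1 hy0 hy1)

theorem Dd_lt_N1_add_N2 (hx0 : 0 ≤ x) (hx1 : x ≤ 1) (hy0 : -1/3 ≤ y) (hy1 : y < 0) :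
    Dd x y < N1 x y + N2 x y := by
  -- Handelman certificate: a positive combination of products of `x, 1 - x, -y, 1 + 3y`
  have key : 135 * (N1 x y + N2 x y - Dd x y) =
      56 * (1 + 3*y) + 288 * (-y) + 150 * (1 + 3*y)^2 + 270 * (-y) * (1 + 3*y)^2
      + 135 * (-y) * (1 + 3*y)^3 + 90 * (1 - x) * (-y) * (1 + 3*y)^3
      + 720 * (1 - x)^2 * (1 + 3*y)^2 + 315 * (1 - x)^2 * (1 + 3*y)^3 + 544 * (1 - x)^3
      + 1480 * (1 - x)^3 * (1 + 3*y) + 140 * (1 - x)^3 * (1 + 3*y)^3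
      + 240 * (1 - x)^4 * (1 + 3*y)^2 + 96 * x * (1 - x)^3 + 840 * x * (1 - x)^3 * (1 + 3*y)
      + 576 * x * (1 - x)^4 + 720 * x * (1 - x)^4 * (1 + 3*y) + 1840 * x^2 * (1 + 3*y)
      + 255 * x^2 * (1 + 3*y)^2 + 135 * x^2 * (-y) * (1 + 3*y)^2
      + 560 * x^2 * (1 - x) * (1 + 3*y) + 420 * x^2 * (1 - x) * (1 + 3*y)^2
      + 1344 * x^4 + 1296 * x^4 * (1 - x) := by
    unfold N1 N2 Dd Q1 Q2 P
    ring
  have hu : 0 ≤ 1 - x := by linarith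
  have ht : 0 < -y := by linarith
  have hs : 0 ≤ 1 + 3*y := by linarith
  -- as atoms, the box constraints have signs that `positivity` reads off the hypotheses
  generalize 1 - x = u at hu key
  generalize -y = t at ht key
  generalize 1 + 3*y = s at hs key
  have : 0 < 135 * (N1 x y + N2 x y - Dd x y) := by
    rw [key]
    positivity
  linarith

theorem intersection_parameters_in_range (x y : ℝ) (hd : d x y = 0)
    (hx0 : 0 < x) (hx1 : x < 1) (hy0 : -1/3 ≤ y) (hy1 : y < 0) :
    Dtau x y ≠ 0 ∧ Dd x y ≠ 0 ∧
    0 < Ntau x y / Dtau x y ∧ Ntau x y / Dtau x y < 1 ∧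
    0 < N1 x y / Dd x y ∧ 0 < N2 x y / Dd x y ∧
    N1 x y / Dd x y + N2 x y / Dd x y < 1 := by
  have hDtau : Dtau x y < 0 := Dtau_neg hx0.le hy0 hy1.le
  have hDd : Dd x y < 0 := by
    rw [Dd_eq]
    exact mul_neg_of_neg_of_pos hDtau (P_pos hx1.ne (by linarith))
  refine ⟨hDtau.ne, hDd.ne, div_pos_of_neg_of_neg (Ntau_neg hx0 hy0 hy1) hDtau,
    (div_lt_one_of_neg hDtau).2 (Dtau_lt_Ntau hd hx0 hx1 hy0 hy1),
    div_pos_of_neg_of_neg (N1_neg hd hx0 hx1 hy0 hy1) hDd,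
    div_pos_of_neg_of_neg (N2_neg hd hx0 hx1 hy0 hy1) hDd, ?_⟩
  rw [← add_div, div_lt_one_of_neg hDd]
  exact Dd_lt_N1_add_N2 hx0.le hx1.le hy0 hy1
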